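/- For the inductively defined robustness tree (leaves carry reals; Min/Max nodes combine children values scaled by positive weights), the sign of the value of a tree does not depend on the weights: for any two assignments of positive weights to the same tree structure with the same leaf values, the resulting root values have the same sign (both positive, both negative, or both zero). -/
import Mathlib


/-- Robustness tree: a leaf carries a real value; Min/Max nodes carry a
nonempty list of (weight, subtree) pairs (encoded as head child + tail). -/
inductive RTree where
  | leaf : ℝ → RTree
  | minNode : (ℝ × RTree) → List (ℝ × RTree) → RTree
  | maxNode : (ℝ × RTree) → List (ℝ × RTree) → RTree

mutual
/-- Value of a robustness tree: weights scale children values, combined by min/max. -/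
noncomputable def RTree.val : RTree → ℝ
  | .leaf r => r
  | .minNode c cs => (RTree.vals cs).foldl min (c.1 * c.2.val)
  | .maxNode c cs => (RTree.vals cs).foldl max (c.1 * c.2.val)

noncomputable def RTree.vals : List (ℝ × RTree) → List ℝ
  | [] => []
  | p :: ps => p.1 * p.2.val :: RTree.vals ps
end

mutual
/-- All weights in the tree are strictly positive. -/
def RTree.weightsPos : RTree → Prop
  | .leaf _ => True
  | .minNode c cs => 0 < c.1 ∧ c.2.weightsPos ∧ RTree.weightsPosList cs
  | .maxNode c cs => 0 < c.1 ∧ c.2.weightsPos ∧ RTree.weightsPosList cs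

def RTree.weightsPosList : List (ℝ × RTree) → Prop
  | [] => True
  | p :: ps => 0 < p.1 ∧ p.2.weightsPos ∧ RTree.weightsPosList ps
end

mutual
/-- All leaf values in the tree are strictly positive. -/
def RTree.leavesPos : RTree → Prop
  | .leaf r => 0 < r
  | .minNode c cs => c.2.leavesPos ∧ RTree.leavesPosList cs
  | .maxNode c cs => c.2.leavesPos ∧ RTree.leavesPosList cs

def RTree.leavesPosList : List (ℝ × RTree) → Prop
  | [] => True
  | p :: ps => p.2.leavesPos ∧ RTree.leavesPosList ps
end

mutual
/-- Every node (subtree) of the tree has strictly positive value. -/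
def RTree.allNodesPos : RTree → Prop
  | .leaf r => 0 < r
  | t@(.minNode c cs) => 0 < t.val ∧ c.2.allNodesPos ∧ RTree.allNodesPosList cs
  | t@(.maxNode c cs) => 0 < t.val ∧ c.2.allNodesPos ∧ RTree.allNodesPosList cs

def RTree.allNodesPosList : List (ℝ × RTree) → Prop
  | [] => True
  | p :: ps => p.2.allNodesPos ∧ RTree.allNodesPosList ps
end

mutual
/-- Two trees have the same structure and leaf values (weights may differ). -/
def RTree.SameShape : RTree → RTree → Prop
  | .leaf r, .leaf r' => r = r'
  | .minNode c cs, .minNode c' cs' => RTree.SameShape c.2 c'.2 ∧ RTree.SameShapeList cs cs'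
  | .maxNode c cs, .maxNode c' cs' => RTree.SameShape c.2 c'.2 ∧ RTree.SameShapeList cs cs'
  | _, _ => False

def RTree.SameShapeList : List (ℝ × RTree) → List (ℝ × RTree) → Prop
  | [], [] => True
  | p :: ps, q :: qs => RTree.SameShape p.2 q.2 ∧ RTree.SameShapeList ps qs
  | _, _ => False
end

lemma sign_mono_aux : Monotone Real.sign := by
  intro a b h
  unfold Real.sign
  split_ifs <;> linarith

lemma sign_min_aux (a b : ℝ) :
    Real.sign (min a b) = min (Real.sign a) (Real.sign b) := by
  rcases le_total a b with h | h
  · rw [min_eq_left h, min_eq_left (sign_mono_aux h)]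
  · rw [min_eq_right h, min_eq_right (sign_mono_aux h)]

lemma sign_max_aux (a b : ℝ) :
    Real.sign (max a b) = max (Real.sign a) (Real.sign b) := by
  rcases le_total a b with h | h
  · rw [max_eq_right h, max_eq_right (sign_mono_aux h)]
  · rw [max_eq_left h, max_eq_left (sign_mono_aux h)]

lemma sign_foldl_min_aux (l : List ℝ) (a : ℝ) :
    Real.sign (l.foldl min a) = (l.map Real.sign).foldl min (Real.sign a) := by
  induction l generalizing a with
  | nil => rfl
  | cons b l ih => simp [List.foldl, ih, sign_min_aux]

lemma sign_foldl_max_aux (l : List ℝ) (a : ℝ) :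
    Real.sign (l.foldl max a) = (l.map Real.sign).foldl max (Real.sign a) := by
  induction l generalizing a with
  | nil => rfl
  | cons b l ih => simp [List.foldl, ih, sign_max_aux]

lemma sign_pos_mul_aux (w v : ℝ) (hw : 0 < w) :
    Real.sign (w * v) = Real.sign v := by
  rcases lt_trichotomy v 0 with h | h | h
  · rw [Real.sign_of_neg h, Real.sign_of_neg (mul_neg_of_pos_of_neg hw h)]
  · simp [h]
  · rw [Real.sign_of_pos h, Real.sign_of_pos (mul_pos hw h)]

mutual
theorem RTree.signEq_aux : (t t' : RTree) → RTree.SameShape t t' →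
    t.weightsPos → t'.weightsPos → Real.sign t.val = Real.sign t'.val
  | .leaf r, .leaf r', h, _, _ => by
      simp only [RTree.SameShape] at h
      simp [RTree.val, h]
  | .minNode c cs, .minNode c' cs', h, hw, hw' => by
      obtain ⟨h1, h2⟩ := h
      obtain ⟨hp, ht, hl⟩ := hw
      obtain ⟨hp', ht', hl'⟩ := hw'
      simp only [RTree.val, sign_foldl_min_aux]
      rw [sign_pos_mul_aux _ _ hp, sign_pos_mul_aux _ _ hp',
        RTree.signEq_aux c.2 c'.2 h1 ht ht',
        RTree.signEqList_aux cs cs' h2 hl hl']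
  | .maxNode c cs, .maxNode c' cs', h, hw, hw' => by
      obtain ⟨h1, h2⟩ := h
      obtain ⟨hp, ht, hl⟩ := hw
      obtain ⟨hp', ht', hl'⟩ := hw'
      simp only [RTree.val, sign_foldl_max_aux]
      rw [sign_pos_mul_aux _ _ hp, sign_pos_mul_aux _ _ hp',
        RTree.signEq_aux c.2 c'.2 h1 ht ht',
        RTree.signEqList_aux cs cs' h2 hl hl']
  | .leaf _, .minNode _ _, h, _, _ => absurd h (by simp [RTree.SameShape])
  | .leaf _, .maxNode _ _, h, _, _ => absurd h (by simp [RTree.SameShape])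
  | .minNode _ _, .leaf _, h, _, _ => absurd h (by simp [RTree.SameShape])
  | .minNode _ _, .maxNode _ _, h, _, _ => absurd h (by simp [RTree.SameShape])
  | .maxNode _ _, .leaf _, h, _, _ => absurd h (by simp [RTree.SameShape])
  | .maxNode _ _, .minNode _ _, h, _, _ => absurd h (by simp [RTree.SameShape])

theorem RTree.signEqList_aux : (l l' : List (ℝ × RTree)) → RTree.SameShapeList l l' →
    RTree.weightsPosList l → RTree.weightsPosList l' →
    (RTree.vals l).map Real.sign = (RTree.vals l').map Real.sign
  | [], [], _, _, _ => rfl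
  | p :: ps, q :: qs, h, hw, hw' => by
      obtain ⟨h1, h2⟩ := h
      obtain ⟨hp, ht, hl⟩ := hw
      obtain ⟨hp', ht', hl'⟩ := hw'
      simp only [RTree.vals, List.map_cons]
      rw [sign_pos_mul_aux _ _ hp, sign_pos_mul_aux _ _ hp',
        RTree.signEq_aux p.2 q.2 h1 ht ht',
        RTree.signEqList_aux ps qs h2 hl hl']
  | [], _ :: _, h, _, _ => absurd h (by simp [RTree.SameShapeList])
  | _ :: _, [], h, _, _ => absurd h (by simp [RTree.SameShapeList])
end

/-- The sign of the value of a robustness tree does not depend on the (positive)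
weights: two trees with the same structure and leaf values but possibly different
positive weights have root values of the same sign. -/
theorem RTree.sign_val_weight_independent (t t' : RTree)
    (hshape : RTree.SameShape t t')
    (hw : t.weightsPos) (hw' : t'.weightsPos) :
    Real.sign t.val = Real.sign t'.val :=
  RTree.signEq_aux t t' hshape hw hw'
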